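/- arXiv:2306.10480 — 3 statements merged into one kernel-verified Lean document; each statement's English description precedes it below -/
import Mathlib

section
/- Let Z be a real n×n matrix that is symmetric (Zᵀ = Z) and idempotent (Z² = Z), let q ∈ ℝⁿ satisfy Z q = q, and let λ > 0. Define f(x) = (1/2)‖Z x − q‖₂² + λ ∑ᵢ |xᵢ|. Then x* ∈ ℝⁿ is a global minimizer of f if and only if there exists y* ∈ ℝⁿ such that Z x* − q + λ y* = 0 and y* = g(y* + x*), where g is the coordinatewise clamp to [−1,1]. -/
/-!
Since `Z` is a symmetric projection fixing `q`, the gradient `Zᵀ (Z x - q)` of the quadratic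
part is the residual `Z x - q` itself, so the claim is the Lasso optimality condition
`-(Z x - q) / λ ∈ ∂‖·‖₁ (x)`, and `y = g (y + x)` is exactly `yᵢ ∈ ∂|·| (xᵢ)` coordinatewise.
Necessity: moving `x` along one coordinate by `t` gives `|b| + a t ≤ |b + t| + c t²`, and a
linear minorant of `|·|` up to a quadratic error is a subgradient. Sufficiency: the quadratic
part expands exactly around `x`, and the subgradient inequality bounds the `ℓ₁` part.
-/

open Matrix Filter Topology Set

/-- `a ∈ ∂|·| (b)`: `a = sign b` if `b ≠ 0`, and `a ∈ [-1, 1]` if `b = 0`. -/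
def IsAbsSubgradient (a b : ℝ) : Prop := |a| ≤ 1 ∧ a * b = |b|

theorem IsAbsSubgradient.abs_add_mul_sub_le {a b : ℝ} (h : IsAbsSubgradient a b) (c : ℝ) :
    |b| + a * (c - b) ≤ |c| := by
  have : a * c ≤ |c| := calc
    a * c ≤ |a| * |c| := by rw [← abs_mul]; exact le_abs_self _
    _ ≤ |c| := mul_le_of_le_one_left (abs_nonneg c) h.1
  linarith [h.2]

theorem le_of_forall_mem_Ioo_le_add_mul {u v w : ℝ} (h : ∀ s ∈ Ioo (0 : ℝ) 1, u ≤ v + s * w) :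
    u ≤ v := by
  have hlim : Tendsto (fun s : ℝ => v + s * w) (𝓝[>] 0) (𝓝 v) := by
    refine tendsto_nhdsWithin_of_tendsto_nhds ?_
    simpa using ((continuous_id.mul continuous_const).const_add v).tendsto (0 : ℝ)
  exact ge_of_tendsto hlim (eventually_of_mem (Ioo_mem_nhdsGT one_pos) h)

theorem isAbsSubgradient_of_forall_le {a b c : ℝ}
    (h : ∀ t, |b| + a * t ≤ |b + t| + c * t ^ 2) : IsAbsSubgradient a b := by
  have hle : a ≤ 1 := le_of_forall_mem_Ioo_le_add_mul (w := c) fun s hs => by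
    have := h s
    have := abs_add_le b s
    rw [abs_of_pos hs.1] at this
    nlinarith [hs.1]
  have hge : -a ≤ 1 := le_of_forall_mem_Ioo_le_add_mul (w := c) fun s hs => by
    have := h (-s)
    have := abs_add_le b (-s)
    rw [abs_neg, abs_of_pos hs.1] at this
    nlinarith [hs.1]
  have habs : |a| ≤ 1 := abs_le.2 ⟨by linarith, hle⟩
  refine ⟨habs, le_antisymm ?_ ?_⟩
  · calc a * b ≤ |a| * |b| := by rw [← abs_mul]; exact le_abs_self _
      _ ≤ |b| := mul_le_of_le_one_left (abs_nonneg b) habs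
  · -- moving from `b` towards `0` decreases `|·|` at exactly the rate `|b|`
    refine le_of_forall_mem_Ioo_le_add_mul (w := c * b ^ 2) fun s hs => ?_
    have hb := h (-(s * b))
    have : |b + -(s * b)| = (1 - s) * |b| := by
      rw [show b + -(s * b) = (1 - s) * b by ring, abs_mul, abs_of_pos (by linarith [hs.2])]
    rw [this] at hb
    nlinarith [hs.1]

theorem eq_clamp_iff (a b : ℝ) :
    a = max (-1) (min 1 (a + b)) ↔ IsAbsSubgradient a b := by
  unfold IsAbsSubgradient
  rcases lt_trichotomy b 0 with hb | rfl | hb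
  · rw [abs_of_neg hb, abs_le]
    constructor
    · grind
    · rintro ⟨-, h⟩
      have : a = -1 := by nlinarith
      grind
  · simp only [add_zero, mul_zero, abs_zero, and_true, abs_le]
    grind
  · rw [abs_of_pos hb, abs_le]
    constructor
    · grind
    · rintro ⟨-, h⟩
      have : a = 1 := by nlinarith
      grind

section Lasso

variable {m n : Type*} [Fintype m] [Fintype n]

noncomputable def lassoObjective (A : Matrix m n ℝ) (q : m → ℝ) (lam : ℝ) (x : n → ℝ) : ℝ :=
  (1 / 2) * ((A *ᵥ x - q) ⬝ᵥ (A *ᵥ x - q)) + lam * ∑ i, |x i|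

theorem residual_dotProduct_self_add (A : Matrix m n ℝ) (q : m → ℝ) (x d : n → ℝ) :
    (A *ᵥ (x + d) - q) ⬝ᵥ (A *ᵥ (x + d) - q) =
      (A *ᵥ x - q) ⬝ᵥ (A *ᵥ x - q) + 2 * ((Aᵀ *ᵥ (A *ᵥ x - q)) ⬝ᵥ d) + (A *ᵥ d) ⬝ᵥ (A *ᵥ d) := by
  rw [mulVec_add, show A *ᵥ x + A *ᵥ d - q = (A *ᵥ x - q) + A *ᵥ d by abel, mulVec_transpose,
    ← dotProduct_mulVec, add_dotProduct, dotProduct_add, dotProduct_add,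
    dotProduct_comm (A *ᵥ d)]
  ring

theorem sum_abs_add_single [DecidableEq n] (x : n → ℝ) (i : n) (t : ℝ) :
    ∑ j, |(x + Pi.single i t : n → ℝ) j| = ∑ j, |x j| + (|x i + t| - |x i|) := by
  rw [← sub_eq_iff_eq_add', ← Finset.sum_sub_distrib, Fintype.sum_eq_single i]
  · simp
  · intro j hj
    simp [Pi.single_eq_of_ne hj]

variable {A : Matrix m n ℝ} {q : m → ℝ} {lam : ℝ}

theorem isAbsSubgradient_of_isMin [DecidableEq n] (hlam : 0 < lam) {xs : n → ℝ}
    (hmin : ∀ x, lassoObjective A q lam xs ≤ lassoObjective A q lam x) (i : n) :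
    IsAbsSubgradient (-(Aᵀ *ᵥ (A *ᵥ xs - q)) i / lam) (xs i) := by
  set v := A *ᵥ Pi.single i 1
  refine isAbsSubgradient_of_forall_le (c := v ⬝ᵥ v / (2 * lam)) fun t => ?_
  have hquad : (A *ᵥ Pi.single i t) ⬝ᵥ (A *ᵥ Pi.single i t) = t ^ 2 * v ⬝ᵥ v := by
    rw [show Pi.single i t = t • Pi.single i (1 : ℝ) by
      rw [← Pi.single_smul', smul_eq_mul, mul_one], mulVec_smul, smul_dotProduct,
      dotProduct_smul, smul_eq_mul, smul_eq_mul]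
    ring
  have h := hmin (xs + Pi.single i t)
  rw [lassoObjective, lassoObjective, residual_dotProduct_self_add, sum_abs_add_single,
    dotProduct_single, hquad] at h
  rw [← mul_le_mul_iff_right₀ hlam]
  field_simp
  linarith

theorem lassoObjective_le_of_isAbsSubgradient {xs ys : n → ℝ} (hlam : 0 < lam)
    (hstat : Aᵀ *ᵥ (A *ᵥ xs - q) + lam • ys = 0) (hsub : ∀ i, IsAbsSubgradient (ys i) (xs i))
    (x : n → ℝ) : lassoObjective A q lam xs ≤ lassoObjective A q lam x := by
  have hgrad : Aᵀ *ᵥ (A *ᵥ xs - q) = -(lam • ys) := eq_neg_of_add_eq_zero_left hstat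
  have hl1 : ∑ i, |xs i| + ys ⬝ᵥ (x - xs) ≤ ∑ i, |x i| := by
    rw [dotProduct, ← Finset.sum_add_distrib]
    exact Finset.sum_le_sum fun i _ => (hsub i).abs_add_mul_sub_le (x i)
  have hquad := residual_dotProduct_self_add A q xs (x - xs)
  rw [add_sub_cancel, hgrad, neg_dotProduct, smul_dotProduct, smul_eq_mul] at hquad
  have hres : 0 ≤ (A *ᵥ (x - xs)) ⬝ᵥ (A *ᵥ (x - xs)) :=
    Finset.sum_nonneg fun i _ => mul_self_nonneg _
  unfold lassoObjective
  linarith [mul_le_mul_of_nonneg_left hl1 hlam.le]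

theorem lassoObjective_isMin_iff [DecidableEq n] (hlam : 0 < lam) (xs : n → ℝ) :
    (∀ x, lassoObjective A q lam xs ≤ lassoObjective A q lam x) ↔
      ∃ ys, Aᵀ *ᵥ (A *ᵥ xs - q) + lam • ys = 0 ∧ ∀ i, IsAbsSubgradient (ys i) (xs i) := by
  refine ⟨fun hmin => ⟨-lam⁻¹ • Aᵀ *ᵥ (A *ᵥ xs - q), ?_, fun i => ?_⟩, ?_⟩
  · rw [smul_smul, mul_neg, mul_inv_cancel₀ hlam.ne', neg_smul, one_smul, add_neg_cancel]
  · simpa [div_eq_inv_mul] using isAbsSubgradient_of_isMin hlam hmin i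
  · rintro ⟨ys, hstat, hsub⟩
    exact lassoObjective_le_of_isAbsSubgradient hlam hstat hsub

end Lasso

theorem transpose_mulVec_residual_of_idempotent {n R : Type*} [Fintype n] [Ring R]
    {Z : Matrix n n R} (hsym : Zᵀ = Z) (hidem : Z * Z = Z) {q : n → R} (hq : Z *ᵥ q = q)
    (x : n → R) : Zᵀ *ᵥ (Z *ᵥ x - q) = Z *ᵥ x - q := by
  rw [hsym, mulVec_sub, mulVec_mulVec, hidem, hq]

/-- Optimality condition for `f(x) = (1/2)‖Z x − q‖₂² + λ ∑ᵢ |xᵢ|` with `Z` symmetric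
idempotent and `Z q = q`: `x*` is a global minimizer iff there is `y*` with
`Z x* − q + λ y* = 0` and `y* = g (y* + x*)`, `g` the coordinatewise clamp to `[-1,1]`. -/
theorem stmt_3 (n : ℕ) (Z : Matrix (Fin n) (Fin n) ℝ)
    (hsym : Zᵀ = Z) (hidem : Z * Z = Z)
    (q : Fin n → ℝ) (hq : Z *ᵥ q = q)
    (lam : ℝ) (hlam : 0 < lam)
    (g : (Fin n → ℝ) → (Fin n → ℝ))
    (hg : ∀ u i, g u i = max (-1) (min 1 (u i)))
    (f : (Fin n → ℝ) → ℝ)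
    (hf : ∀ x, f x = (1/2) * (∑ i, ((Z *ᵥ x - q) i)^2) + lam * ∑ i, |x i|) :
    ∀ xs : Fin n → ℝ,
      (∀ x, f xs ≤ f x) ↔
        ∃ ys : Fin n → ℝ, Z *ᵥ xs - q + lam • ys = 0 ∧ ys = g (ys + xs) := by
  intro xs
  have hf_eq : f = lassoObjective Z q lam :=
    funext fun x => by simp only [hf, lassoObjective, dotProduct, sq]
  have hg_eq (ys : Fin n → ℝ) : ys = g (ys + xs) ↔ ∀ i, IsAbsSubgradient (ys i) (xs i) := by
    simp only [funext_iff, hg, Pi.add_apply, eq_clamp_iff]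
  rw [hf_eq, lassoObjective_isMin_iff hlam,
    transpose_mulVec_residual_of_idempotent hsym hidem hq]
  simp only [hg_eq]
end

section
/- Let A be any real m×n matrix. Then the matrix-valued function α ↦ A · (α (Aᵀ A + α I)⁻¹), defined for α > 0, tends to the zero matrix as α tends to 0 from the right. -/
open Matrix Filter

/-!
Let `N = AᵀA + αI` and let `y` be the `j`-th column of `N⁻¹`, so that `N y = e_j` and the
`j`-th column of `A (α N⁻¹)` is `α A y`. Pairing `N y = e_j` with `y` gives
`‖A y‖² + α ‖y‖² = y_j`, hence `‖A y‖² ≤ y_j - α y_j² ≤ 1 / (4α)`. So every entry of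
`A (α N⁻¹)` has square at most `α / 4`, which tends to `0`.
-/

section

variable {m n R : Type*} [Fintype m] [Fintype n]

theorem Matrix.dotProduct_transpose_mul_self_add_smul_one_mulVec [DecidableEq n] [CommRing R]
    (A : Matrix m n R) (α : R) (y : n → R) :
    y ⬝ᵥ ((Aᵀ * A + α • 1) *ᵥ y) = (A *ᵥ y) ⬝ᵥ (A *ᵥ y) + α * (y ⬝ᵥ y) := by
  rw [add_mulVec, ← mulVec_mulVec, dotProduct_add, dotProduct_mulVec, vecMul_transpose,
    smul_mulVec, one_mulVec, dotProduct_smul, smul_eq_mul, dotProduct_comm]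

theorem Matrix.sq_le_dotProduct_self [CommRing R] [LinearOrder R] [IsStrictOrderedRing R]
    (x : n → R) (i : n) : x i ^ 2 ≤ x ⬝ᵥ x := by
  rw [sq]
  exact Finset.single_le_sum (fun k _ => mul_self_nonneg (x k)) (Finset.mem_univ i)

theorem Matrix.four_mul_mul_sq_mulVec_le_one_of_mulVec_eq_single [DecidableEq n] [Field R]
    [LinearOrder R] [IsStrictOrderedRing R] (A : Matrix m n R) {α : R} (hα : 0 < α)
    {y : n → R} {j : n}
    (hy : (Aᵀ * A + α • 1) *ᵥ y = Pi.single j 1) (i : m) :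
    4 * α * (A *ᵥ y) i ^ 2 ≤ 1 := by
  have hpair := dotProduct_transpose_mul_self_add_smul_one_mulVec A α y
  rw [hy, dotProduct_single, mul_one] at hpair
  have hAy := sq_le_dotProduct_self (A *ᵥ y) i
  have hyj := sq_le_dotProduct_self y j
  nlinarith [sq_nonneg (1 - 2 * α * y j), mul_le_mul_of_nonneg_left hyj hα.le]

theorem Matrix.posDef_transpose_mul_self_add_smul_one [DecidableEq n] (A : Matrix m n ℝ)
    {α : ℝ} (hα : 0 < α) :
    (Aᵀ * A + α • (1 : Matrix n n ℝ)).PosDef := by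
  rw [← conjTranspose_eq_transpose_of_trivial]
  exact PosDef.posSemidef_add (posSemidef_conjTranspose_mul_self A) (PosDef.one.smul hα)

theorem Matrix.sq_mul_smul_inv_transpose_mul_self_add_smul_one_apply_le [DecidableEq n]
    (A : Matrix m n ℝ) {α : ℝ} (hα : 0 < α) (i : m) (j : n) :
    (A * (α • (Aᵀ * A + α • (1 : Matrix n n ℝ))⁻¹)) i j ^ 2 ≤ α / 4 := by
  set N := Aᵀ * A + α • (1 : Matrix n n ℝ)
  have hN : N * N⁻¹ = 1 :=
    mul_nonsing_inv N ((isUnit_iff_isUnit_det N).mp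
      (posDef_transpose_mul_self_add_smul_one A hα).isUnit)
  have hy : N *ᵥ (N⁻¹ *ᵥ Pi.single j 1) = Pi.single j 1 := by
    rw [mulVec_mulVec, hN, one_mulVec]
  have hentry : (A * (α • N⁻¹)) i j = α * (A *ᵥ (N⁻¹ *ᵥ Pi.single j 1)) i := by
    rw [mulVec_mulVec, mulVec_single_one, Matrix.mul_smul]
    rfl
  have hbound := four_mul_mul_sq_mulVec_le_one_of_mulVec_eq_single A hα hy i
  rw [hentry, le_div_iff₀ (by norm_num : (0:ℝ) < 4)]
  nlinarith

end

/-- For any real matrix `A`, the matrix `A · (α (Aᵀ A + α I)⁻¹)` tends to the zero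
matrix as `α → 0⁺`. -/
theorem stmt_9 (m n : ℕ) (A : Matrix (Fin m) (Fin n) ℝ) :
    Filter.Tendsto
      (fun α : ℝ => A * (α • (Aᵀ * A + α • (1 : Matrix (Fin n) (Fin n) ℝ))⁻¹))
      (nhdsWithin 0 (Set.Ioi 0)) (nhds (0 : Matrix (Fin m) (Fin n) ℝ)) := by
  have hsqrt : Tendsto Real.sqrt (nhdsWithin 0 (Set.Ioi 0)) (nhds 0) := by
    simpa using (Real.continuous_sqrt.tendsto 0).mono_left nhdsWithin_le_nhds
  refine tendsto_pi_nhds.mpr fun i => tendsto_pi_nhds.mpr fun j => ?_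
  refine squeeze_zero_norm' ?_ hsqrt
  filter_upwards [self_mem_nhdsWithin] with α (hα : 0 < α)
  refine Real.abs_le_sqrt ?_
  linarith [sq_mul_smul_inv_transpose_mul_self_add_smul_one_apply_le A hα i j]
end

section
/- Let α > 0 and let v₁, …, v_m be real 1×S row vectors. Define P₀ = I (the S×S identity) and recursively P_{j+1} = P_j − (P_j v_{j+1}ᵀ v_{j+1} P_j) / (α + c_j), where c_j is the entry of the 1×1 matrix v_{j+1} P_j v_{j+1}ᵀ. Then for every 0 ≤ j ≤ m, P_j = α (∑_{i=1}^{j} v_iᵀ v_i + α I)⁻¹; in particular P_m = α (Vᵀ V + α I)⁻¹ where V is the m×S matrix whose rows are v₁, …, v_m. -/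
/-!
With `Gⱼ = ∑_{i<j} vᵢᵀ vᵢ + α I`, the update `P (j+1)` is the Sherman–Morrison formula for
`(Gⱼ + vⱼᵀ vⱼ)⁻¹` rescaled by `α`. Each `Gⱼ` is positive definite, so `vⱼ Gⱼ⁻¹ vⱼᵀ ≥ 0` and the
denominator `α + cⱼ = α (1 + vⱼ Gⱼ⁻¹ vⱼᵀ)` never vanishes; induction on `j` finishes, and
`Vᵀ V = ∑_{i<m} vᵢᵀ vᵢ` gives the last claim.
-/

open Matrix

namespace Matrix

variable {n K : Type*} [Fintype n] [DecidableEq n] [Field K]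

lemma inv_smul_one_of_ne_zero {c : K} (hc : c ≠ 0) : (c • (1 : Matrix n n K))⁻¹ = c⁻¹ • 1 :=
  inv_eq_left_inv <| by rw [smul_mul_smul_comm, one_mul, inv_mul_cancel₀ hc, one_smul]

/-- The Sherman–Morrison formula: the rank-one case of the Woodbury identity. -/
theorem add_mul_inv_eq_sub_of_fin_one (A : Matrix n n K) (hA : IsUnit A)
    (u : Matrix n (Fin 1) K) (w : Matrix (Fin 1) n K) (h : 1 + (w * A⁻¹ * u) 0 0 ≠ 0) :
    (A + u * w)⁻¹ = A⁻¹ - (1 + (w * A⁻¹ * u) 0 0)⁻¹ • (A⁻¹ * u * w * A⁻¹) := by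
  have hcap : (1 : Matrix (Fin 1) (Fin 1) K)⁻¹ + w * A⁻¹ * u = (1 + (w * A⁻¹ * u) 0 0) • 1 := by
    ext i j
    fin_cases i; fin_cases j
    simp
  have woodbury := add_mul_mul_inv_eq_sub A u 1 w hA isUnit_one
    (hcap ▸ (isUnit_one (M := Matrix (Fin 1) (Fin 1) K)).smul (Units.mk0 _ h))
  rw [Matrix.mul_one, hcap, inv_smul_one_of_ne_zero h] at woodbury
  rw [woodbury]
  simp only [Matrix.mul_smul, Matrix.smul_mul, Matrix.mul_one]

theorem smul_inv_add_mul_eq_sub (c : K) (A : Matrix n n K) (hA : IsUnit A)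
    (u : Matrix n (Fin 1) K) (w : Matrix (Fin 1) n K) (h : 1 + (w * A⁻¹ * u) 0 0 ≠ 0) :
    c • (A + u * w)⁻¹ =
      c • A⁻¹ - (c + (w * (c • A⁻¹) * u) 0 0)⁻¹ • (c • A⁻¹ * u * w * (c • A⁻¹)) := by
  rw [add_mul_inv_eq_sub_of_fin_one A hA u w h, smul_sub]
  simp only [Matrix.mul_smul, Matrix.smul_mul, smul_apply, smul_smul, smul_eq_mul]
  congr 2
  rcases eq_or_ne c 0 with rfl | hc
  · simp
  · field_simp

lemma PosDef.diag_mul_inv_mul_transpose_nonneg {m : Type*} [Fintype m] {A : Matrix n n ℝ}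
    (hA : A.PosDef) (w : Matrix m n ℝ) (i : m) : 0 ≤ (w * A⁻¹ * wᵀ) i i :=
  (hA.inv.posSemidef.mul_mul_conjTranspose_same w).diag_nonneg

end Matrix

lemma posDef_sum_transpose_mul_self_add_smul_one {ι m n : Type*} [Fintype m] [Fintype n]
    [DecidableEq n] (s : Finset ι) (v : ι → Matrix m n ℝ) {α : ℝ} (hα : 0 < α) :
    (∑ i ∈ s, (v i)ᵀ * v i + α • (1 : Matrix n n ℝ)).PosDef :=
  PosDef.posSemidef_add (posSemidef_sum s fun i _ => posSemidef_conjTranspose_mul_self (v i))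
    (PosDef.one.smul hα)

lemma transpose_mul_self_eq_sum_range {R n : Type*} [CommSemiring R]
    {m : ℕ} (V : Matrix (Fin m) n R) (v : ℕ → Matrix (Fin 1) n R)
    (hV : ∀ i s, V i s = v i 0 s) : Vᵀ * V = ∑ i ∈ Finset.range m, (v i)ᵀ * v i := by
  ext s t
  simp only [Matrix.sum_apply, mul_apply, transpose_apply, Fin.sum_univ_one, hV]
  exact (Finset.sum_range fun i => v i 0 s * v i 0 t).symm

/-- Recursive rank-one (RLS-style) computation of the orthogonal projector: starting
from `P 0 = I` and updating `P (j+1) = P j − (P j vⱼ₊₁ᵀ vⱼ₊₁ P j)/(α + cⱼ)` with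
`cⱼ` the entry of `vⱼ₊₁ P j vⱼ₊₁ᵀ`, we get `P j = α (∑_{i<j} vᵢᵀ vᵢ + α I)⁻¹` for all
`j ≤ m`; in particular `P m = α (Vᵀ V + α I)⁻¹` where `V` has rows `v₁, …, v_m`. -/
theorem stmt_11 (m S : ℕ) (α : ℝ) (hα : 0 < α)
    (v : ℕ → Matrix (Fin 1) (Fin S) ℝ)
    (V : Matrix (Fin m) (Fin S) ℝ) (hV : ∀ (i : Fin m) (s : Fin S), V i s = v i 0 s)
    (P : ℕ → Matrix (Fin S) (Fin S) ℝ)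
    (hP0 : P 0 = 1)
    (hPrec : ∀ j < m, P (j + 1) =
      P j - (α + (v j * P j * (v j)ᵀ) 0 0)⁻¹ • (P j * (v j)ᵀ * v j * P j)) :
    (∀ j ≤ m, P j =
       α • ((∑ i ∈ Finset.range j, (v i)ᵀ * v i) + α • (1 : Matrix (Fin S) (Fin S) ℝ))⁻¹) ∧
    P m = α • (Vᵀ * V + α • (1 : Matrix (Fin S) (Fin S) ℝ))⁻¹ := by
  set G : ℕ → Matrix (Fin S) (Fin S) ℝ :=
    fun j => ∑ i ∈ Finset.range j, (v i)ᵀ * v i + α • 1 with hG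
  have hG_posDef (j : ℕ) : (G j).PosDef := posDef_sum_transpose_mul_self_add_smul_one _ v hα
  have hG_succ (j : ℕ) : G (j + 1) = G j + (v j)ᵀ * v j := by
    simp only [hG, Finset.sum_range_succ]
    abel
  have hP (j : ℕ) (hj : j ≤ m) : P j = α • (G j)⁻¹ := by
    induction j with
    | zero =>
      simp [hG, hP0, inv_smul_one_of_ne_zero hα.ne', smul_smul, mul_inv_cancel₀ hα.ne']
    | succ j ih =>
      have hd := (hG_posDef j).diag_mul_inv_mul_transpose_nonneg (v j) 0
      rw [hPrec j hj, ih (Nat.le_of_succ_le hj), hG_succ,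
        smul_inv_add_mul_eq_sub α _ (hG_posDef j).isUnit _ _ (by positivity)]
  exact ⟨hP, transpose_mul_self_eq_sum_range V v hV ▸ hP m le_rfl⟩
end
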